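/- arXiv:2310.14913 — 6 statements merged into one kernel-verified Lean document; each statement's English description precedes it below -/
import Mathlib

section
/- For any family (A_j)_{j∈J}, the local function of the union satisfies (⋃_{j∈J} A_j)* = (⋃_{j∈J} A_j*) ∪ ⋂_{N} (⋃_{j∈J\N} A_j)*, where the intersection ranges over all finite subsets N of J. -/
open Set Topology

variable {X : Type*}

/-- An ideal of subsets: contains ∅, downward closed, closed under finite unions. -/
def IsIdeal {X : Type*} (I : Set (Set X)) : Prop :=
  (∅ : Set X) ∈ I ∧ (∀ A B : Set X, A ∈ I → B ⊆ A → B ∈ I) ∧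
    (∀ A B : Set X, A ∈ I → B ∈ I → A ∪ B ∈ I)

/-- The local function A* of A w.r.t. a topology τ and an ideal I. -/
def locFn {X : Type*} (τ : TopologicalSpace X) (I : Set (Set X)) (A : Set X) : Set X :=
  {x | ∀ U : Set X, IsOpen[τ] U → x ∈ U → A ∩ U ∉ I}

theorem stmt7 {J : Type*} (τ : TopologicalSpace X) (I : Set (Set X)) (hI : IsIdeal I)
    (A : J → Set X) :
    locFn τ I (⋃ j, A j) =
      (⋃ j, locFn τ I (A j)) ∪ ⋂ N : Finset J, locFn τ I (⋃ j ∈ (↑N : Set J)ᶜ, A j) := by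
  classical
  letI := τ
  have hbi : ∀ (N : Finset J) (f : J → Set X), (∀ j ∈ N, f j ∈ I) → (⋃ j ∈ N, f j) ∈ I := by
    intro N f hf
    induction N using Finset.induction with
    | empty => simpa using hI.1
    | @insert a s ha ih =>
      rw [Finset.set_biUnion_insert]
      exact hI.2.2 _ _ (hf _ (Finset.mem_insert_self _ _))
        (ih fun j hj => hf j (Finset.mem_insert_of_mem hj))
  ext x
  constructor
  · intro hx
    by_cases h : x ∈ ⋃ j, locFn τ I (A j)
    · exact Or.inl h
    · refine Or.inr ?_
      simp only [mem_iUnion, not_exists] at h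
      have hV : ∀ j, ∃ V : Set X, IsOpen V ∧ x ∈ V ∧ A j ∩ V ∈ I := by
        intro j
        have := h j
        simp only [locFn, mem_setOf_eq] at this
        push_neg at this
        exact this
      choose V hVopen hxV hVI using hV
      refine mem_iInter.2 fun N => ?_
      intro U hU hxU hmem
      set W := U ∩ ⋂ j ∈ N, V j with hW
      have hWopen : IsOpen W := hU.inter (isOpen_biInter_finset fun j _ => hVopen j)
      have hxW : x ∈ W := ⟨hxU, mem_biInter fun j _ => hxV j⟩
      have hsub : (⋃ j, A j) ∩ W ⊆
          ((⋃ j ∈ (↑N : Set J)ᶜ, A j) ∩ U) ∪ ⋃ j ∈ N, (A j ∩ V j) := by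
        rintro y ⟨hyA, hyU, hyV⟩
        obtain ⟨j, hj⟩ := mem_iUnion.1 hyA
        by_cases hjN : j ∈ N
        · exact Or.inr (mem_biUnion hjN ⟨hj, mem_iInter₂.1 hyV j hjN⟩)
        · exact Or.inl ⟨mem_biUnion hjN hj, hyU⟩
      have hS : (((⋃ j ∈ (↑N : Set J)ᶜ, A j) ∩ U) ∪ ⋃ j ∈ N, (A j ∩ V j)) ∈ I :=
        hI.2.2 _ _ hmem (hbi N _ fun j _ => hVI j)
      exact hx W hWopen hxW (hI.2.1 _ _ hS hsub)
  · rintro (h | h)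
    · obtain ⟨j, hj⟩ := mem_iUnion.1 h
      intro U hU hxU hmem
      exact hj U hU hxU (hI.2.1 _ _ hmem (inter_subset_inter_left _ (subset_iUnion A j)))
    · have := mem_iInter.1 h (∅ : Finset J)
      intro U hU hxU hmem
      refine this U hU hxU ?_
      convert hmem using 2
      simp
end

section
/- For two ideals I and J on X, the local function with respect to the ideal I ∨ J = {A ∪ B : A ∈ I, B ∈ J} satisfies A*(I∨J, τ) = A*(J, τ*(I)) ∩ A*(I, τ*(J)) for every A ⊆ X, where τ*(I) denotes the cluster topology generated from τ and I. -/
open Set Topology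

variable {X : Type*}

/-- If `C ⊆ P ∪ Q` with `P ∈ I`, `Q ∈ J`, then `C` is a union of a member of `I`
and a member of `J`. -/
lemma mem_sum_of_subset {I J : Set (Set X)} (hI : IsIdeal I) (hJ : IsIdeal J)
    {C P Q : Set X} (hP : P ∈ I) (hQ : Q ∈ J) (hC : C ⊆ P ∪ Q) :
    C ∈ {C : Set X | ∃ P ∈ I, ∃ Q ∈ J, C = P ∪ Q} := by
  refine ⟨C ∩ P, hI.2.1 _ _ hP inter_subset_right, C \ P, hJ.2.1 _ _ hQ ?_, ?_⟩
  · intro y hy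
    rcases hC hy.1 with h | h
    · exact absurd h hy.2
    · exact h
  · ext y
    constructor
    · intro hy
      by_cases hyP : y ∈ P
      · exact Or.inl ⟨hy, hyP⟩
      · exact Or.inr ⟨hy, hyP⟩
    · rintro (⟨h, _⟩ | ⟨h, _⟩) <;> exact h

/-- `U \ P` is open in the cluster topology when `U` is τ-open and `P ∈ I`. -/
lemma diff_open {τ : TopologicalSpace X} {I : Set (Set X)} (hI : IsIdeal I)
    {σ : TopologicalSpace X} (hσ : ∀ W : Set X, IsOpen[σ] W ↔ locFn τ I Wᶜ ⊆ Wᶜ)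
    {U P : Set X} (hU : IsOpen[τ] U) (hP : P ∈ I) : IsOpen[σ] (U \ P) := by
  rw [hσ]
  intro x hx
  by_contra hxW
  simp only [mem_compl_iff, not_not] at hxW
  refine hx U hU hxW.1 (hI.2.1 _ _ hP ?_)
  intro y hy
  rcases hy with ⟨hyc, hyU⟩
  simp only [mem_compl_iff, mem_diff, not_and, not_not] at hyc
  exact hyc hyU

theorem stmt14 (τ : TopologicalSpace X) (I J : Set (Set X))
    (hI : IsIdeal I) (hJ : IsIdeal J)
    (σI σJ : TopologicalSpace X)
    (hσI : ∀ W : Set X, IsOpen[σI] W ↔ locFn τ I Wᶜ ⊆ Wᶜ)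
    (hσJ : ∀ W : Set X, IsOpen[σJ] W ↔ locFn τ J Wᶜ ⊆ Wᶜ)
    (A : Set X) :
    locFn τ {C : Set X | ∃ P ∈ I, ∃ Q ∈ J, C = P ∪ Q} A =
      locFn σI J A ∩ locFn σJ I A := by
  ext x
  simp only [mem_inter_iff]
  constructor
  · intro hx
    constructor
    · -- x ∈ locFn σI J A
      intro U hU hxU hAU
      have h1 : x ∉ locFn τ I Uᶜ := fun h => ((hσI U).mp hU h) hxU
      simp only [locFn, mem_setOf_eq] at h1
      push_neg at h1
      obtain ⟨V, hVopen, hxV, hVI⟩ := h1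
      refine hx V hVopen hxV (mem_sum_of_subset hI hJ hVI hAU ?_)
      intro y ⟨hyA, hyV⟩
      by_cases hyU : y ∈ U
      · exact Or.inr ⟨hyA, hyU⟩
      · exact Or.inl ⟨hyU, hyV⟩
    · -- x ∈ locFn σJ I A
      intro U hU hxU hAU
      have h1 : x ∉ locFn τ J Uᶜ := fun h => ((hσJ U).mp hU h) hxU
      simp only [locFn, mem_setOf_eq] at h1
      push_neg at h1
      obtain ⟨V, hVopen, hxV, hVJ⟩ := h1
      refine hx V hVopen hxV (mem_sum_of_subset hI hJ hAU hVJ ?_)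
      intro y ⟨hyA, hyV⟩
      by_cases hyU : y ∈ U
      · exact Or.inl ⟨hyA, hyU⟩
      · exact Or.inr ⟨hyU, hyV⟩
  · rintro ⟨h1, h2⟩ U hU hxU hK
    obtain ⟨P, hP, Q, hQ, hPQ⟩ := hK
    by_cases hxP : x ∈ P
    · -- use W = U \ (Q \ P), which is σJ-open
      have hQ' : Q \ P ∈ J := hJ.2.1 _ _ hQ diff_subset
      have hW : IsOpen[σJ] (U \ (Q \ P)) := diff_open hJ hσJ hU hQ'
      refine h2 _ hW ⟨hxU, fun h => h.2 hxP⟩ (hI.2.1 _ _ hP ?_)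
      rintro y ⟨hyA, hyU, hyQ'⟩
      have : y ∈ P ∪ Q := hPQ ▸ (⟨hyA, hyU⟩ : y ∈ A ∩ U)
      rcases this with h | h
      · exact h
      · by_cases hyP : y ∈ P
        · exact hyP
        · exact absurd ⟨h, hyP⟩ hyQ'
    · -- use W = U \ P, which is σI-open
      have hW : IsOpen[σI] (U \ P) := diff_open hI hσI hU hP
      refine h1 _ hW ⟨hxU, hxP⟩ (hJ.2.1 _ _ hQ ?_)
      rintro y ⟨hyA, hyU, hyP⟩
      have : y ∈ P ∪ Q := hPQ ▸ (⟨hyA, hyU⟩ : y ∈ A ∩ U)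
      rcases this with h | h
      · exact absurd h hyP
      · exact h
end

section
/- Iterating the cluster topology construction is idempotent: (τ*)* = τ*, i.e., the cluster topology built from τ*(I) with the same ideal I equals τ*(I). -/
open Set Topology

variable {X : Type*}

theorem stmt15 (τ : TopologicalSpace X) (I : Set (Set X)) (hI : IsIdeal I)
    (σ σ₂ : TopologicalSpace X)
    (hσ : ∀ W : Set X, IsOpen[σ] W ↔ locFn τ I Wᶜ ⊆ Wᶜ)
    (hσ₂ : ∀ W : Set X, IsOpen[σ₂] W ↔ locFn σ I Wᶜ ⊆ Wᶜ) :
    σ₂ = σ := by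
  obtain ⟨hempty, hdown, hunion⟩ := hI
  -- τ-open sets are σ-open
  have hτσ : ∀ U : Set X, IsOpen[τ] U → IsOpen[σ] U := by
    intro U hU
    rw [hσ]
    intro x hx
    by_contra hxU
    simp only [mem_compl_iff, not_not] at hxU
    exact hx U hU hxU (by simpa using hempty)
  apply TopologicalSpace.ext
  ext W
  rw [hσ, hσ₂]
  constructor
  · -- locFn σ I Wᶜ ⊆ Wᶜ → locFn τ I Wᶜ ⊆ Wᶜ
    intro h x hx
    by_contra hxW
    simp only [mem_compl_iff, not_not] at hxW
    have hxnot : x ∉ locFn σ I Wᶜ := fun hmem => (h hmem) hxW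
    simp only [locFn, mem_setOf_eq, not_forall] at hxnot
    obtain ⟨U, hUopen, hxU, hUI⟩ := hxnot
    simp only [not_not] at hUI
    -- U is σ-open, so locFn τ I Uᶜ ⊆ Uᶜ; x ∈ U so x ∉ locFn τ I Uᶜ
    have hxnot2 : x ∉ locFn τ I Uᶜ := fun hmem => ((hσ U).mp hUopen hmem) hxU
    simp only [locFn, mem_setOf_eq, not_forall] at hxnot2
    obtain ⟨V, hVopen, hxV, hVI⟩ := hxnot2
    simp only [not_not] at hVI
    have hsub : Wᶜ ∩ V ⊆ (Wᶜ ∩ U) ∪ (Uᶜ ∩ V) := by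
      intro y ⟨hyW, hyV⟩
      by_cases hyU : y ∈ U
      · exact Or.inl ⟨hyW, hyU⟩
      · exact Or.inr ⟨hyU, hyV⟩
    exact hx V hVopen hxV (hdown _ _ (hunion _ _ hUI hVI) hsub)
  · -- locFn τ I Wᶜ ⊆ Wᶜ → locFn σ I Wᶜ ⊆ Wᶜ
    intro h x hx
    apply h
    intro U hU hxU
    exact hx U (hτσ U hU) hxU
end

section
/- If the topology τ has a countable base, then every σ-ideal I on X is adherent, meaning A \ A* ∈ I for every subset A of X. -/
open Set Topology

variable {X : Type*}

theorem stmt17 (τ : TopologicalSpace X) (hτ : @SecondCountableTopology X τ)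
    (I : Set (Set X)) (hI : IsIdeal I)
    (hσ : ∀ f : ℕ → Set X, (∀ n, f n ∈ I) → (⋃ n, f n) ∈ I)
    (A : Set X) : A \ locFn τ I A ∈ I := by
  obtain ⟨b, hb_cnt, -, hb_basis⟩ := @TopologicalSpace.exists_countable_basis X τ hτ
  set C : Set (Set X) := {s | ∃ U ∈ b, A ∩ U ∈ I ∧ s = A ∩ U} with hC
  have hC_cnt : C.Countable := by
    have : C ⊆ (fun U => A ∩ U) '' b := by
      rintro s ⟨U, hU, -, rfl⟩; exact ⟨U, hU, rfl⟩
    exact (hb_cnt.image _).mono this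
  have hC_I : ∀ s ∈ C, s ∈ I := by rintro s ⟨U, hU, hUI, rfl⟩; exact hUI
  have hsub : A \ locFn τ I A ⊆ ⋃₀ C := by
    rintro x ⟨hxA, hx⟩
    simp only [locFn, Set.mem_setOf_eq, not_forall] at hx
    obtain ⟨U, hUo, hxU, hUI⟩ := hx
    obtain ⟨V, hVb, hxV, hVU⟩ := hb_basis.exists_subset_of_mem_open hxU hUo
    have hVI : A ∩ V ∈ I := hI.2.1 _ _ (not_not.mp hUI) (inter_subset_inter_right _ hVU)
    exact ⟨A ∩ V, ⟨V, hVb, hVI, rfl⟩, ⟨hxA, hxV⟩⟩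
  have hsU : ⋃₀ C ∈ I := by
    rcases C.eq_empty_or_nonempty with h | h
    · simpa [h] using hI.1
    · obtain ⟨f, hf⟩ := hC_cnt.exists_eq_range h
      have := hσ f (fun n => hC_I _ (hf ▸ ⟨n, rfl⟩))
      rw [hf, sUnion_range]; exact this
  exact hI.2.1 _ _ hsU hsub
end

section
/- Suppose I is an adherent ideal (A \ A* ∈ I for all A). Then a set R is c-closed (R* ⊆ R) if and only if R can be written as a disjoint union Q ∪ A where Q is closed in τ and A ∈ I. Equivalently, a set W is c-open iff W = U \ A for some U ∈ τ and A ∈ I. -/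
open Set Topology

variable {X : Type*}

theorem stmt18 (τ : TopologicalSpace X) (I : Set (Set X)) (hI : IsIdeal I)
    (hadh : ∀ A : Set X, A \ locFn τ I A ∈ I) :
    (∀ R : Set X, locFn τ I R ⊆ R ↔
      ∃ Q A : Set X, IsClosed[τ] Q ∧ A ∈ I ∧ Q ∩ A = ∅ ∧ R = Q ∪ A) ∧
    (∀ W : Set X, locFn τ I Wᶜ ⊆ Wᶜ ↔
      ∃ U A : Set X, IsOpen[τ] U ∧ A ∈ I ∧ W = U \ A) := by
  obtain ⟨h0, hdown, hunion⟩ := hI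
  have key : ∀ R : Set X, locFn τ I R ⊆ R ↔
      ∃ Q A : Set X, IsClosed[τ] Q ∧ A ∈ I ∧ Q ∩ A = ∅ ∧ R = Q ∪ A := by
    intro R
    constructor
    · intro h
      refine ⟨locFn τ I R, R \ locFn τ I R, ?_, hadh R, ?_, ?_⟩
      · -- locFn is closed
        rw [show IsClosed[τ] (locFn τ I R) ↔ IsOpen[τ] (locFn τ I R)ᶜ from (@isOpen_compl_iff X (locFn τ I R) τ).symm]
        have hc : (locFn τ I R)ᶜ = ⋃ U ∈ {U : Set X | IsOpen[τ] U ∧ R ∩ U ∈ I}, U := by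
          ext x
          simp only [mem_compl_iff, locFn, mem_setOf_eq, mem_iUnion, exists_prop]
          constructor
          · intro hx
            push_neg at hx
            obtain ⟨U, hU, hxU, hRU⟩ := hx
            exact ⟨U, ⟨hU, hRU⟩, hxU⟩
          · rintro ⟨U, ⟨hU, hRU⟩, hxU⟩ hall
            exact hall U hU hxU hRU
        rw [hc]
        exact isOpen_biUnion fun U hU => hU.1
      · ext x
        simp only [mem_inter_iff, mem_diff, mem_empty_iff_false, iff_false]
        tauto
      · exact (union_diff_cancel h).symm
    · rintro ⟨Q, A, hQ, hA, _, rfl⟩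
      intro x hx
      by_contra hxR
      have hxQ : x ∉ Q := fun hq => hxR (Or.inl hq)
      have hsub : (Q ∪ A) ∩ Qᶜ ⊆ A := by
        rintro y ⟨hy1, hy2⟩
        rcases hy1 with hy | hy
        · exact absurd hy hy2
        · exact hy
      exact hx Qᶜ hQ.isOpen_compl hxQ (hdown A _ hA hsub)
  refine ⟨key, fun W => ?_⟩
  rw [key Wᶜ]
  constructor
  · rintro ⟨Q, A, hQ, hA, _, hW⟩
    refine ⟨Qᶜ, A, hQ.isOpen_compl, hA, ?_⟩
    have : W = (Q ∪ A)ᶜ := by rw [← hW, compl_compl]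
    rw [this, compl_union]
    rfl
  · rintro ⟨U, A, hU, hA, rfl⟩
    refine ⟨Uᶜ, A ∩ U, hU.isClosed_compl, hdown A _ hA inter_subset_left, ?_, ?_⟩
    · ext x
      simp only [mem_inter_iff, mem_compl_iff, mem_empty_iff_false, iff_false]
      tauto
    · ext x
      simp only [mem_compl_iff, mem_diff, mem_union, mem_inter_iff]
      tauto
end

section
/- If I is an adherent ideal, then every c-closed set R admits a unique representation R = L ∪ A as a disjoint union where L is c-regular (L* = L) and A ∈ I. -/
open Set Topology

variable {X : Type*}

lemma locFn_mono (τ : TopologicalSpace X) (I : Set (Set X)) (hI : IsIdeal I)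
    {A B : Set X} (h : A ⊆ B) : locFn τ I A ⊆ locFn τ I B := by
  intro x hx U hU hxU hBU
  exact hx U hU hxU (hI.2.1 _ _ hBU (inter_subset_inter_left _ h))

lemma locFn_of_mem (τ : TopologicalSpace X) (I : Set (Set X)) (hI : IsIdeal I)
    {A : Set X} (hA : A ∈ I) : locFn τ I A = ∅ := by
  ext x
  simp only [mem_empty_iff_false, iff_false]
  intro hx
  exact hx univ isOpen_univ (mem_univ x) (hI.2.1 _ _ hA (inter_subset_left))

lemma locFn_union (τ : TopologicalSpace X) (I : Set (Set X)) (hI : IsIdeal I)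
    (A B : Set X) : locFn τ I (A ∪ B) = locFn τ I A ∪ locFn τ I B := by
  apply Subset.antisymm
  · intro x hx
    by_contra hc
    simp only [mem_union, not_or] at hc
    obtain ⟨hA, hB⟩ := hc
    simp only [locFn, mem_setOf_eq, not_forall] at hA hB
    obtain ⟨U, hU, hxU, hAU⟩ := hA
    rw [not_not] at hAU
    obtain ⟨V, hV, hxV, hBV⟩ := hB
    rw [not_not] at hBV
    have key : (A ∪ B) ∩ (U ∩ V) ⊆ (A ∩ U) ∪ (B ∩ V) := by
      intro y hy
      rcases hy.1 with h | h
      · exact Or.inl ⟨h, hy.2.1⟩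
      · exact Or.inr ⟨h, hy.2.2⟩
    exact hx (U ∩ V) (hU.inter hV) ⟨hxU, hxV⟩
      (hI.2.1 _ _ (hI.2.2 _ _ hAU hBV) key)
  · exact union_subset (locFn_mono τ I hI subset_union_left)
      (locFn_mono τ I hI subset_union_right)

theorem stmt19 (τ : TopologicalSpace X) (I : Set (Set X)) (hI : IsIdeal I)
    (hadh : ∀ A : Set X, A \ locFn τ I A ∈ I)
    (R : Set X) (hR : locFn τ I R ⊆ R) :
    (∃ L A : Set X, locFn τ I L = L ∧ A ∈ I ∧ L ∩ A = ∅ ∧ R = L ∪ A) ∧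
    (∀ L M A B : Set X, locFn τ I L = L → locFn τ I M = M → A ∈ I → B ∈ I →
      L ∩ A = ∅ → M ∩ B = ∅ → L ∪ A = M ∪ B → L = M ∧ A = B) := by
  constructor
  · refine ⟨locFn τ I R, R \ locFn τ I R, ?_, hadh R, ?_, ?_⟩
    · have hsplit : R = locFn τ I R ∪ (R \ locFn τ I R) := by
        rw [union_diff_self]
        exact (union_eq_right.mpr hR).symm ▸ (union_eq_self_of_subset_left hR).symm
      calc locFn τ I (locFn τ I R)
          = locFn τ I (locFn τ I R) ∪ locFn τ I (R \ locFn τ I R) := by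
            rw [locFn_of_mem τ I hI (hadh R), union_empty]
        _ = locFn τ I (locFn τ I R ∪ (R \ locFn τ I R)) := (locFn_union τ I hI _ _).symm
        _ = locFn τ I R := by rw [← hsplit]
    · exact inter_diff_self _ _
    · rw [union_diff_self]
      exact (union_eq_self_of_subset_left hR).symm
  · intro L M A B hL hM hA hB hLA hMB heq
    have hLM : L = M := by
      have h1 : locFn τ I (L ∪ A) = L := by
        rw [locFn_union τ I hI, hL, locFn_of_mem τ I hI hA, union_empty]
      have h2 : locFn τ I (M ∪ B) = M := by
        rw [locFn_union τ I hI, hM, locFn_of_mem τ I hI hB, union_empty]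
      rw [← h1, heq, h2]
    refine ⟨hLM, ?_⟩
    have hA' : A = (L ∪ A) \ L := by
      rw [union_diff_left]
      ext x
      constructor
      · intro hx
        refine ⟨hx, fun hxL => ?_⟩
        exact absurd (show x ∈ L ∩ A from ⟨hxL, hx⟩) (by rw [hLA]; exact notMem_empty x)
      · exact fun hx => hx.1
    have hB' : B = (M ∪ B) \ M := by
      rw [union_diff_left]
      ext x
      constructor
      · intro hx
        refine ⟨hx, fun hxM => ?_⟩
        exact absurd (show x ∈ M ∩ B from ⟨hxM, hx⟩) (by rw [hMB]; exact notMem_empty x)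
      · exact fun hx => hx.1
    rw [hA', hB', heq, hLM]
end
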